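/- Let p : U → X be a continuous surjective map of topological spaces, and assume U has only finitely many irreducible components. Assume that for every irreducible component W of X the preimage p⁻¹(W) is an irreducible subset of U. Then the maps W ↦ p⁻¹(W) and Z ↦ closure(p(Z)) are mutually inverse bijections between the set of irreducible components of X and the set of irreducible components of U. -/

import Mathlib

/-!
A component `Z` of `U` maps into some component `W` of `X`; then `Z ⊆ p⁻¹(W)`, which is
irreducible, so maximality forces `Z = p⁻¹(W)`. Conversely, any irreducible `Z ⊇ p⁻¹(W)` has
irreducible closed image containing `p(p⁻¹(W)) = W`, so maximality of `W` gives `Z = p⁻¹(W)`.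
-/

section

variable {U X : Type*} [TopologicalSpace X] {p : U → X}

theorem closure_image_preimage_of_mem_irreducibleComponents (hsurj : Function.Surjective p)
    {W : Set X} (hW : W ∈ irreducibleComponents X) : closure (p '' (p ⁻¹' W)) = W := by
  rw [Set.image_preimage_eq W hsurj, (isClosed_of_mem_irreducibleComponents W hW).closure_eq]

variable [TopologicalSpace U]

theorem preimage_mem_irreducibleComponents_of_isIrreducible (hp : Continuous p)
    (hsurj : Function.Surjective p) {W : Set X} (hW : W ∈ irreducibleComponents X)
    (hirr : IsIrreducible (p ⁻¹' W)) : p ⁻¹' W ∈ irreducibleComponents U := by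
  refine ⟨hirr, fun Z hZ hWZ => ?_⟩
  have hW_sub : W ⊆ closure (p '' Z) :=
    closure_image_preimage_of_mem_irreducibleComponents hsurj hW ▸
      closure_mono (Set.image_mono hWZ)
  have hZW : closure (p '' Z) ⊆ W := hW.2 (hZ.image p hp.continuousOn).closure hW_sub
  exact fun u hu => hZW (subset_closure (Set.mem_image_of_mem p hu))

theorem exists_mem_irreducibleComponents_eq_preimage (hp : Continuous p)
    (hirr : ∀ W ∈ irreducibleComponents X, IsIrreducible (p ⁻¹' W))
    {Z : Set U} (hZ : Z ∈ irreducibleComponents U) :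
    ∃ W ∈ irreducibleComponents X, Z = p ⁻¹' W := by
  obtain ⟨W, hW, hpZW⟩ :=
    exists_mem_irreducibleComponents_subset_of_isIrreducible _ (hZ.1.image p hp.continuousOn)
  have hZW : Z ⊆ p ⁻¹' W := Set.image_subset_iff.mp hpZW
  exact ⟨W, hW, hZW.antisymm (hZ.2 (hirr W hW) hZW)⟩

end

theorem components_bijection_of_preimage_irreducible
    {U X : Type*} [TopologicalSpace U] [TopologicalSpace X]
    (p : U → X) (hp : Continuous p) (hsurj : Function.Surjective p)
    (hirr : ∀ W ∈ irreducibleComponents X, IsIrreducible (p ⁻¹' W)) :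
    (∀ W ∈ irreducibleComponents X, p ⁻¹' W ∈ irreducibleComponents U) ∧
      (∀ Z ∈ irreducibleComponents U, closure (p '' Z) ∈ irreducibleComponents X) ∧
      (∀ W ∈ irreducibleComponents X, closure (p '' (p ⁻¹' W)) = W) ∧
      (∀ Z ∈ irreducibleComponents U, p ⁻¹' closure (p '' Z) = Z) := by
  have hclosure W (hW : W ∈ irreducibleComponents X) :=
    closure_image_preimage_of_mem_irreducibleComponents hsurj hW
  refine ⟨fun W hW => preimage_mem_irreducibleComponents_of_isIrreducible hp hsurj hW (hirr W hW),
    fun Z hZ => ?_, hclosure, fun Z hZ => ?_⟩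
  · obtain ⟨W, hW, rfl⟩ := exists_mem_irreducibleComponents_eq_preimage hp hirr hZ
    rwa [hclosure W hW]
  · obtain ⟨W, hW, rfl⟩ := exists_mem_irreducibleComponents_eq_preimage hp hirr hZ
    rw [hclosure W hW]
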